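/- arXiv:2103.17231 — 6 statements merged into one kernel-verified Lean document; each statement's English description precedes it below -/
import Mathlib

section
/- Let n be a natural number and let s be a nonempty compact convex subset of ℝⁿ (EuclideanSpace ℝ (Fin n)). If f : ℝⁿ → ℝ is twice continuously differentiable (ContDiff ℝ 2), then there exist functions g h : ℝⁿ → ℝ that are convex on s such that f x = g x - h x for every x ∈ s. -/
/-!
For `C` large, `f + C‖·‖²` is convex on `s`: its second derivative in direction `v` is
`D²f(x)(v, v) + 2C‖v‖²`, which is nonnegative as soon as `2C` bounds `‖D²f‖` on `s`, and such a `C`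
exists because `D²f` is continuous and `s` is compact. Then `f = (f + C‖·‖²) - C‖·‖²`.
-/

open Set AffineMap

theorem convexOn_of_comp_lineMap {𝕜 E β : Type*} [Field 𝕜] [LinearOrder 𝕜] [IsStrictOrderedRing 𝕜]
    [AddCommGroup E] [Module 𝕜 E] [AddCommMonoid β] [PartialOrder β] [SMul 𝕜 β]
    {s : Set E} {f : E → β} (hs : Convex 𝕜 s)
    (h : ∀ x ∈ s, ∀ y ∈ s, ConvexOn 𝕜 (Icc (0 : 𝕜) 1) (f ∘ lineMap x y)) : ConvexOn 𝕜 s f := by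
  refine ⟨hs, fun x hx y hy a b ha hb hab => ?_⟩
  have hseg := (h x hx y hy).2 (left_mem_Icc.2 zero_le_one) (right_mem_Icc.2 zero_le_one) ha hb hab
  obtain rfl : a = 1 - b := eq_sub_of_add_eq hab
  simpa [lineMap_apply_module] using hseg

theorem convexOn_of_hasFDerivAt2_nonneg {E : Type*} [NormedAddCommGroup E] [NormedSpace ℝ E]
    {s : Set E} {f : E → ℝ} {f' : E → E →L[ℝ] ℝ} {f'' : E → E →L[ℝ] E →L[ℝ] ℝ}
    (hs : Convex ℝ s) (hf : ∀ x ∈ s, HasFDerivAt f (f' x) x)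
    (hf' : ∀ x ∈ s, HasFDerivAt f' (f'' x) x) (hf''_nonneg : ∀ x ∈ s, ∀ v, 0 ≤ f'' x v v) :
    ConvexOn ℝ s f := by
  refine convexOn_of_comp_lineMap hs fun x hx y hy => ?_
  have hmem : MapsTo (lineMap x y) (Icc (0 : ℝ) 1) s := hs.mapsTo_lineMap hx hy
  have hφ : ∀ t ∈ Icc (0 : ℝ) 1,
      HasDerivAt (f ∘ lineMap x y) (f' (lineMap x y t) (y - x)) t :=
    fun t ht => (hf _ (hmem ht)).comp_hasDerivAt t hasDerivAt_lineMap
  have hφ' : ∀ t ∈ Icc (0 : ℝ) 1, HasDerivAt (fun t => f' (lineMap x y t) (y - x))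
      (f'' (lineMap x y t) (y - x) (y - x)) t := fun t ht => by
    simpa using ((hf' _ (hmem ht)).comp_hasDerivAt t hasDerivAt_lineMap).clm_apply
      (hasDerivAt_const t (y - x))
  exact convexOn_of_hasDerivWithinAt2_nonneg (convex_Icc 0 1)
    (fun t ht => (hφ t ht).continuousAt.continuousWithinAt)
    (fun t ht => (hφ t (interior_subset ht)).hasDerivWithinAt)
    (fun t ht => (hφ' t (interior_subset ht)).hasDerivWithinAt)
    fun t ht => hf''_nonneg _ (hmem (interior_subset ht)) _

theorem convexOn_add_mul_norm_sq {F : Type*} [NormedAddCommGroup F] [InnerProductSpace ℝ F]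
    {s : Set F} {f : F → ℝ} {f' : F → F →L[ℝ] ℝ} {f'' : F → F →L[ℝ] F →L[ℝ] ℝ} {C : ℝ}
    (hs : Convex ℝ s) (hf : ∀ x ∈ s, HasFDerivAt f (f' x) x)
    (hf' : ∀ x ∈ s, HasFDerivAt f' (f'' x) x) (hC : ∀ x ∈ s, ‖f'' x‖ ≤ 2 * C) :
    ConvexOn ℝ s fun x => f x + C * ‖x‖ ^ 2 := by
  refine convexOn_of_hasFDerivAt2_nonneg (f' := fun x => f' x + C • 2 • innerSL ℝ x)
    (f'' := fun x => f'' x + C • 2 • innerSL ℝ) hs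
    (fun x hx => (hf x hx).add ((hasStrictFDerivAt_norm_sq x).hasFDerivAt.const_mul C))
    (fun x hx => (hf' x hx).add (((innerSL ℝ).hasFDerivAt.const_smul 2).const_smul C))
    fun x hx v => ?_
  have hbound : |f'' x v v| ≤ 2 * C * ‖v‖ ^ 2 :=
    calc |f'' x v v| ≤ ‖f'' x‖ * ‖v‖ * ‖v‖ := (f'' x).le_opNorm₂ v v
      _ ≤ 2 * C * ‖v‖ ^ 2 := by rw [mul_assoc, ← sq]; gcongr; exact hC x hx
  have hinner : innerSL ℝ v v = ‖v‖ ^ 2 := real_inner_self_eq_norm_sq v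
  simp only [add_apply, smul_apply, nsmul_eq_mul, Nat.cast_ofNat, smul_eq_mul, hinner]
  linarith [neg_abs_le (f'' x v v)]

theorem twice_differentiable_is_difference_of_convex_general
    (n : ℕ) (s : Set (EuclideanSpace ℝ (Fin n)))
    (hs_cpt : IsCompact s) (hs_cvx : Convex ℝ s)
    (f : EuclideanSpace ℝ (Fin n) → ℝ) (hf : ContDiff ℝ 2 f) :
    ∃ g h : EuclideanSpace ℝ (Fin n) → ℝ,
      ConvexOn ℝ s g ∧ ConvexOn ℝ s h ∧ ∀ x ∈ s, f x = g x - h x := by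
  have hDf : ContDiff ℝ 1 (fderiv ℝ f) := hf.fderiv_right (by norm_num)
  obtain ⟨M, hM⟩ := hs_cpt.exists_bound_of_continuousOn
    (hDf.continuous_fderiv one_ne_zero).continuousOn
  set C := max M 0
  refine ⟨fun x => f x + C * ‖x‖ ^ 2, fun x => C * ‖x‖ ^ 2, ?_, ?_, fun x _ => by ring⟩
  · exact convexOn_add_mul_norm_sq hs_cvx
      (fun x _ => (hf.differentiable (by norm_num) x).hasFDerivAt)
      (fun x _ => (hDf.differentiable one_ne_zero x).hasFDerivAt)
      fun x hx => (hM x hx).trans (by linarith [le_max_left M 0, le_max_right M 0])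
  · exact ((convexOn_norm hs_cvx).pow (fun _ _ => norm_nonneg _) 2).smul (le_max_right M 0)

theorem twice_differentiable_is_difference_of_convex
    (n : ℕ) (s : Set (EuclideanSpace ℝ (Fin n)))
    (hs_ne : s.Nonempty) (hs_cpt : IsCompact s) (hs_cvx : Convex ℝ s)
    (f : EuclideanSpace ℝ (Fin n) → ℝ) (hf : ContDiff ℝ 2 f) :
    ∃ g h : EuclideanSpace ℝ (Fin n) → ℝ,
      ConvexOn ℝ s g ∧ ConvexOn ℝ s h ∧ ∀ x ∈ s, f x = g x - h x :=
  twice_differentiable_is_difference_of_convex_general n s hs_cpt hs_cvx f hf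
end

section
/- Let s be a nonempty compact convex subset of ℝⁿ (EuclideanSpace ℝ (Fin n)), let f : ℝⁿ → ℝ be convex on s and Lipschitz on s, and let ε > 0. Then there exist k ≥ 1, vectors a₁,…,a_k ∈ ℝⁿ and reals b₁,…,b_k such that for every x ∈ s, |f x - max_{1 ≤ i ≤ k} (⟪aᵢ, x⟫ + bᵢ)| ≤ ε. -/
open scoped RealInnerProductSpace

open InnerProductSpace in
lemma exists_subgradient_aux {n : ℕ} (F : EuclideanSpace ℝ (Fin n) → ℝ)
    (hF : ConvexOn ℝ Set.univ F) (hFc : Continuous F)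
    (y : EuclideanSpace ℝ (Fin n)) :
    ∃ a : EuclideanSpace ℝ (Fin n), ∀ x, F y + ⟪a, x - y⟫ ≤ F x := by
  set A : Set (EuclideanSpace ℝ (Fin n) × ℝ) :=
    {p | p.1 ∈ Set.univ ∧ F p.1 < p.2} with hA
  have hA_cvx : Convex ℝ A := hF.convex_strict_epigraph
  have hA_open : IsOpen A := by
    have : A = {p : EuclideanSpace ℝ (Fin n) × ℝ | F p.1 < p.2} := by
      ext p; simp [hA]
    rw [this]
    exact isOpen_lt (hFc.comp continuous_fst) continuous_snd
  have hy : ((y, F y) : EuclideanSpace ℝ (Fin n) × ℝ) ∉ A := by simp [hA]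
  obtain ⟨L, hL⟩ := geometric_hahn_banach_point_open hA_cvx hA_open hy
  have hdecomp : ∀ (x : EuclideanSpace ℝ (Fin n)) (t : ℝ),
      L (x, t) = L (x, 0) + t * L (0, 1) := by
    intro x t
    have h : ((x, t) : EuclideanSpace ℝ (Fin n) × ℝ)
        = (x, (0:ℝ)) + t • ((0:EuclideanSpace ℝ (Fin n)), (1:ℝ)) := by
      simp [Prod.ext_iff]
    rw [h, map_add, map_smul, smul_eq_mul]
  set c := L (0, 1) with hcdef
  have hc : 0 < c := by
    have h := hL (y, F y + 1) (by simp [hA])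
    rw [hdecomp y (F y), hdecomp y (F y + 1), add_mul, one_mul] at h
    linarith
  have hkey : ∀ x, L (y, 0) + c * F y ≤ L (x, 0) + c * F x := by
    intro x
    have h1 : ∀ η > (0:ℝ), L (y,0) + c * F y ≤ L (x,0) + c * F x + c * η := by
      intro η hη
      have h := hL (x, F x + η) (by simp [hA]; linarith)
      rw [hdecomp y (F y), hdecomp x (F x + η), add_mul] at h
      linarith
    refine le_of_forall_pos_le_add fun ε hε => ?_
    have h := h1 (ε / c) (div_pos hε hc)
    rw [mul_div_cancel₀ _ (ne_of_gt hc)] at h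
    exact h
  refine ⟨(toDual ℝ _).symm ((-c⁻¹) • (L.comp (ContinuousLinearMap.inl ℝ _ ℝ))),
    fun x => ?_⟩
  have hinner : ⟪(toDual ℝ _).symm ((-c⁻¹) • (L.comp (ContinuousLinearMap.inl ℝ _ ℝ))),
      x - y⟫ = -c⁻¹ * L (x - y, 0) := by
    rw [toDual_symm_apply]
    simp
  rw [hinner]
  have hsub : L (x - y, 0) = L (x, 0) - L (y, 0) := by
    rw [← map_sub]
    congr 1
    simp [Prod.ext_iff]
  rw [hsub]
  have h2 : c * (F y - F x) ≤ L (x,0) - L (y,0) := by linarith [hkey x]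
  have h3 : c⁻¹ * (c * (F y - F x)) ≤ c⁻¹ * (L (x,0) - L (y,0)) :=
    mul_le_mul_of_nonneg_left h2 (le_of_lt (inv_pos.2 hc))
  rw [inv_mul_cancel_left₀ (ne_of_gt hc)] at h3
  nlinarith [h3]

theorem lipschitz_convex_approx_by_max_affine
    (n : ℕ) (s : Set (EuclideanSpace ℝ (Fin n)))
    (hs_ne : s.Nonempty) (hs_cpt : IsCompact s) (hs_cvx : Convex ℝ s)
    (f : EuclideanSpace ℝ (Fin n) → ℝ)
    (hf_cvx : ConvexOn ℝ s f) (hf_lip : ∃ K : NNReal, LipschitzOnWith K f s)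
    (ε : ℝ) (hε : 0 < ε) :
    ∃ (k : ℕ), 1 ≤ k ∧
      ∃ (a : Fin k → EuclideanSpace ℝ (Fin n)) (b : Fin k → ℝ),
        ∀ x ∈ s, |f x - ⨆ i : Fin k, (⟪a i, x⟫ + b i)| ≤ ε := by
  obtain ⟨K, hK⟩ := hf_lip
  set C : ℝ := (K : ℝ) with hCdef
  have hC : 0 ≤ C := K.coe_nonneg
  haveI : Nonempty ↥s := hs_ne.to_subtype
  -- lower bound for f on s
  obtain ⟨z₀, hz₀s, hz₀⟩ := hs_cpt.exists_isMinOn hs_ne (hK.continuousOn)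
  set F : EuclideanSpace ℝ (Fin n) → ℝ :=
    fun x => ⨅ z : ↥s, (f z + C * ‖x - (z : EuclideanSpace ℝ (Fin n))‖) with hFdef
  have hBdd : ∀ x, BddBelow (Set.range fun z : ↥s =>
      f z + C * ‖x - (z : EuclideanSpace ℝ (Fin n))‖) := by
    intro x
    refine ⟨f z₀, ?_⟩
    rintro r ⟨z, rfl⟩
    dsimp only
    have h1 : f z₀ ≤ f z := hz₀ z.2
    have h2 : 0 ≤ C * ‖x - (z : EuclideanSpace ℝ (Fin n))‖ :=
      mul_nonneg hC (norm_nonneg _)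
    linarith
  have hF_le : ∀ x, ∀ z ∈ s, F x ≤ f z + C * ‖x - z‖ := by
    intro x z hz
    exact ciInf_le (hBdd x) ⟨z, hz⟩
  have hflip : ∀ x ∈ s, ∀ z ∈ s, |f x - f z| ≤ C * ‖x - z‖ := by
    intro x hx z hz
    have := hK.dist_le_mul x hx z hz
    rwa [Real.dist_eq, dist_eq_norm] at this
  have hF_eq : ∀ x ∈ s, F x = f x := by
    intro x hx
    refine le_antisymm ?_ ?_
    · have := hF_le x x hx
      simpa using this
    · refine le_ciInf fun z => ?_
      have := hflip x hx z z.2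
      have h := abs_le.1 this
      linarith [h.1]
  -- F is Lipschitz, hence continuous
  have hF_lip : ∀ x y, F x ≤ F y + C * ‖x - y‖ := by
    intro x y
    rw [← sub_le_iff_le_add]
    refine le_ciInf fun z => ?_
    have h1 : F x ≤ f z + C * ‖x - (z : EuclideanSpace ℝ (Fin n))‖ := hF_le x z z.2
    have h2 : ‖x - (z : EuclideanSpace ℝ (Fin n))‖ ≤ ‖x - y‖ + ‖y - (z:EuclideanSpace ℝ (Fin n))‖ := by
      simpa using norm_sub_le_norm_sub_add_norm_sub x y (z : EuclideanSpace ℝ (Fin n))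
    nlinarith [mul_le_mul_of_nonneg_left h2 hC]
  have hF_cont : Continuous F := by
    refine (LipschitzWith.of_dist_le_mul (K := K) fun x y => ?_).continuous
    rw [Real.dist_eq, dist_eq_norm]
    have h1 := hF_lip x y
    have h2 := hF_lip y x
    rw [norm_sub_rev y x] at h2
    rw [abs_le]
    constructor <;> [linarith [h2]; linarith [h1]]
  -- F is convex on univ
  have hF_cvx : ConvexOn ℝ Set.univ F := by
    refine ⟨convex_univ, fun u _ v _ p q hp hq hpq => ?_⟩
    rw [smul_eq_mul, smul_eq_mul]
    have h1 : p * F u = ⨅ z : ↥s, p * (f z + C * ‖u - (z:EuclideanSpace ℝ (Fin n))‖) :=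
      Real.mul_iInf_of_nonneg hp _
    have h2 : q * F v = ⨅ z : ↥s, q * (f z + C * ‖v - (z:EuclideanSpace ℝ (Fin n))‖) :=
      Real.mul_iInf_of_nonneg hq _
    rw [h1, h2]
    refine le_ciInf_add_ciInf fun w₁ w₂ => ?_
    have hw : p • (w₁ : EuclideanSpace ℝ (Fin n)) + q • (w₂ : EuclideanSpace ℝ (Fin n)) ∈ s :=
      hs_cvx w₁.2 w₂.2 hp hq hpq
    have hfw : f (p • (w₁:EuclideanSpace ℝ (Fin n)) + q • w₂) ≤ p * f w₁ + q * f w₂ := by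
      have := hf_cvx.2 w₁.2 w₂.2 hp hq hpq
      simpa [smul_eq_mul] using this
    have hnorm : ‖(p • u + q • v) - (p • (w₁:EuclideanSpace ℝ (Fin n)) + q • w₂)‖
        ≤ p * ‖u - (w₁:EuclideanSpace ℝ (Fin n))‖ + q * ‖v - (w₂:EuclideanSpace ℝ (Fin n))‖ := by
      have heq : (p • u + q • v) - (p • (w₁:EuclideanSpace ℝ (Fin n)) + q • w₂)
          = p • (u - (w₁:EuclideanSpace ℝ (Fin n))) + q • (v - (w₂:EuclideanSpace ℝ (Fin n))) := by
        module
      rw [heq]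
      calc ‖p • (u - (w₁:EuclideanSpace ℝ (Fin n))) + q • (v - (w₂:EuclideanSpace ℝ (Fin n)))‖
          ≤ ‖p • (u - (w₁:EuclideanSpace ℝ (Fin n)))‖ + ‖q • (v - (w₂:EuclideanSpace ℝ (Fin n)))‖ :=
            norm_add_le _ _
        _ = p * ‖u - (w₁:EuclideanSpace ℝ (Fin n))‖ + q * ‖v - (w₂:EuclideanSpace ℝ (Fin n))‖ := by
            rw [norm_smul, norm_smul, Real.norm_eq_abs, Real.norm_eq_abs,
              abs_of_nonneg hp, abs_of_nonneg hq]
    calc F (p • u + q • v)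
        ≤ f (p • (w₁:EuclideanSpace ℝ (Fin n)) + q • w₂)
          + C * ‖(p • u + q • v) - (p • (w₁:EuclideanSpace ℝ (Fin n)) + q • w₂)‖ :=
          hF_le _ _ hw
      _ ≤ (p * f w₁ + q * f w₂)
          + C * (p * ‖u - (w₁:EuclideanSpace ℝ (Fin n))‖ + q * ‖v - (w₂:EuclideanSpace ℝ (Fin n))‖) := by
          have := mul_le_mul_of_nonneg_left hnorm hC
          linarith
      _ = p * (f w₁ + C * ‖u - (w₁:EuclideanSpace ℝ (Fin n))‖)
          + q * (f w₂ + C * ‖v - (w₂:EuclideanSpace ℝ (Fin n))‖) := by ring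
  -- subgradients with norm bound
  have hsub : ∀ z : ↥s, ∃ a : EuclideanSpace ℝ (Fin n),
      ‖a‖ ≤ C ∧ ∀ x, f z + ⟪a, x - (z:EuclideanSpace ℝ (Fin n))⟫ ≤ F x := by
    intro z
    obtain ⟨a, ha⟩ := exists_subgradient_aux F hF_cvx hF_cont z
    have hFz : F (z:EuclideanSpace ℝ (Fin n)) = f z := hF_eq _ z.2
    refine ⟨a, ?_, fun x => by rw [← hFz]; exact ha x⟩
    have h1 := ha ((z:EuclideanSpace ℝ (Fin n)) + a)
    rw [add_sub_cancel_left, real_inner_self_eq_norm_sq] at h1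
    have h2 : F ((z:EuclideanSpace ℝ (Fin n)) + a) ≤ f z + C * ‖a‖ := by
      have := hF_le ((z:EuclideanSpace ℝ (Fin n)) + a) z z.2
      simpa using this
    rw [hFz] at h1
    rcases eq_or_lt_of_le (norm_nonneg a) with h | h
    · rw [← h]; exact hC
    · nlinarith
  choose A hA₁ hA₂ using hsub
  -- finite δ-net
  set δ : ℝ := ε / (2 * C + 1) with hδdef
  have hδ : 0 < δ := div_pos hε (by positivity)
  obtain ⟨t, ht⟩ := hs_cpt.elim_finite_subcover
    (fun z : ↥s => Metric.ball (z : EuclideanSpace ℝ (Fin n)) δ)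
    (fun z => Metric.isOpen_ball)
    (fun x hx => Set.mem_iUnion.2 ⟨⟨x, hx⟩, Metric.mem_ball_self hδ⟩)
  have ht_ne : t.Nonempty := by
    obtain ⟨x₀, hx₀⟩ := hs_ne
    obtain ⟨i, hi, _⟩ := Set.mem_iUnion₂.1 (ht hx₀)
    exact ⟨i, hi⟩
  set k := t.card with hk
  have hk1 : 1 ≤ k := Finset.card_pos.2 ht_ne
  haveI : Nonempty (Fin k) := ⟨⟨0, hk1⟩⟩
  set e : Fin k → ↥s := fun i => (t.equivFin.symm i : ↥s) with he
  refine ⟨k, hk1, fun i => A (e i),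
    fun i => f (e i) - ⟪A (e i), (e i : EuclideanSpace ℝ (Fin n))⟫, fun x hx => ?_⟩
  have hterm : ∀ i : Fin k, ⟪A (e i), x⟫ + (f (e i) - ⟪A (e i), (e i : EuclideanSpace ℝ (Fin n))⟫)
      = f (e i) + ⟪A (e i), x - (e i : EuclideanSpace ℝ (Fin n))⟫ := by
    intro i
    rw [inner_sub_right]
    ring
  have hub : ∀ i : Fin k, ⟪A (e i), x⟫ + (f (e i) - ⟪A (e i), (e i : EuclideanSpace ℝ (Fin n))⟫)
      ≤ f x := by
    intro i
    rw [hterm i]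
    have := hA₂ (e i) x
    rwa [hF_eq x hx] at this
  have hsup_le : (⨆ i : Fin k, (⟪A (e i), x⟫
      + (f (e i) - ⟪A (e i), (e i : EuclideanSpace ℝ (Fin n))⟫))) ≤ f x :=
    ciSup_le hub
  -- lower bound
  obtain ⟨z, hz, hxz⟩ := Set.mem_iUnion₂.1 (ht hx)
  set j : Fin k := t.equivFin ⟨z, hz⟩ with hj
  have hej : e j = z := by
    simp [he, hj]
  have hxz' : ‖x - (z : EuclideanSpace ℝ (Fin n))‖ ≤ δ := by
    rw [← dist_eq_norm]
    exact le_of_lt (Metric.mem_ball.1 hxz)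
  have hinner_lb : -(C * δ) ≤ ⟪A z, x - (z : EuclideanSpace ℝ (Fin n))⟫ := by
    have h1 := abs_real_inner_le_norm (A z) (x - (z : EuclideanSpace ℝ (Fin n)))
    have h2 := abs_le.1 h1
    have h3 : ‖A z‖ * ‖x - (z : EuclideanSpace ℝ (Fin n))‖ ≤ C * δ :=
      mul_le_mul (hA₁ z) hxz' (norm_nonneg _) hC
    linarith [h2.1]
  have hfz : f x - C * δ ≤ f z := by
    have := hflip x hx z z.2
    have h := abs_le.1 this
    have h3 : C * ‖x - (z : EuclideanSpace ℝ (Fin n))‖ ≤ C * δ :=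
      mul_le_mul_of_nonneg_left hxz' hC
    linarith [h.1]
  have h2Cδ : 2 * C * δ ≤ ε := by
    rw [hδdef, ← mul_div_assoc, div_le_iff₀ (by positivity : (0:ℝ) < 2 * C + 1)]
    nlinarith
  have hlb : f x - ε ≤ ⨆ i : Fin k, (⟪A (e i), x⟫
      + (f (e i) - ⟪A (e i), (e i : EuclideanSpace ℝ (Fin n))⟫)) := by
    have hj_le : f x - ε ≤ ⟪A (e j), x⟫
        + (f (e j) - ⟪A (e j), (e j : EuclideanSpace ℝ (Fin n))⟫) := by
      rw [hterm j, hej]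
      linarith
    exact le_trans hj_le (le_ciSup (f := fun i : Fin k => ⟪A (e i), x⟫
      + (f (e i) - ⟪A (e i), (e i : EuclideanSpace ℝ (Fin n))⟫))
      (Set.Finite.bddAbove (Set.finite_range _)) j)
  rw [abs_le]
  constructor <;> linarith
end

section
/- Let ℓ₁, …, ℓ_k : ℝⁿ → ℝ (k ≥ 1) be affine functions on EuclideanSpace ℝ (Fin n). Define for each x the sequence z₀(x) = 0 and z_i(x) = max(0, z_{i-1}(x) + ℓ_i(x) - ℓ_{i+1}(x)) for 1 ≤ i ≤ k-1. Then for every x, z_{k-1}(x) + ℓ_k(x) = max_{1 ≤ i ≤ k} ℓᵢ(x). In particular, the maximum of k affine functions is computed exactly by a ReLU network with k layers of one neuron each, where the weight multiplying the previous layer's output is the nonnegative number 1. -/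
/-! Since `max 0 (a - b) + b = max a b`, adding `ℓ_{i+1}(x)` to the `i`-th neuron turns the
running maximum `max_{j ≤ i} ℓ_j(x)` into `max_{j ≤ i+1} ℓ_j(x)`; so, by induction,
`z_i(x) + ℓ_{i+1}(x) = max_{1 ≤ j ≤ i+1} ℓ_j(x)`. -/

/-- The ICNN recursion with one ReLU neuron per layer:
`z₀(x) = 0` and `z_i(x) = max (0) (z_{i-1}(x) + ℓ_i(x) - ℓ_{i+1}(x))` for `i ≥ 1`. -/
noncomputable def icnnMaxSeq (n : ℕ) (ℓ : ℕ → EuclideanSpace ℝ (Fin n) →ᵃ[ℝ] ℝ) :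
    ℕ → EuclideanSpace ℝ (Fin n) → ℝ
  | 0 => fun _ => 0
  | (i + 1) => fun x => max 0 (icnnMaxSeq n ℓ i x + ℓ (i + 1) x - ℓ (i + 2) x)

theorem max_zero_sub_add_eq_max {α : Type*} [AddGroup α] [LinearOrder α]
    [AddRightMono α] (a b : α) : max 0 (a - b) + b = max b a := by
  rw [← max_add_add_right, zero_add, sub_add_cancel]

theorem Finset.sup'_Icc_add_one_right {α : Type*} [LinearOrder α] (f : ℕ → α) {a b : ℕ}
    (h : a ≤ b) :
    (Finset.Icc a (b + 1)).sup' (Finset.nonempty_Icc.mpr (by omega)) f =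
      max ((Finset.Icc a b).sup' (Finset.nonempty_Icc.mpr h) f) (f (b + 1)) := by
  rw [Finset.sup'_congr _ (Finset.insert_Icc_right_eq_Icc_add_one (by omega)).symm fun _ _ => rfl,
    Finset.sup'_insert, max_comm]

theorem icnnMaxSeq_add_eq_sup' (n : ℕ) (ℓ : ℕ → EuclideanSpace ℝ (Fin n) →ᵃ[ℝ] ℝ)
    (x : EuclideanSpace ℝ (Fin n)) (i : ℕ) :
    icnnMaxSeq n ℓ i x + ℓ (i + 1) x =
      (Finset.Icc 1 (i + 1)).sup' (Finset.nonempty_Icc.mpr (by omega)) (fun j => ℓ j x) := by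
  induction i with
  | zero => simp [icnnMaxSeq]
  | succ i ih =>
    rw [Finset.sup'_Icc_add_one_right _ (by omega), ← ih, icnnMaxSeq,
      max_zero_sub_add_eq_max, max_comm]

theorem icnn_computes_max_of_affine
    (n k : ℕ) (hk : 1 ≤ k)
    (ℓ : ℕ → EuclideanSpace ℝ (Fin n) →ᵃ[ℝ] ℝ)
    (x : EuclideanSpace ℝ (Fin n)) :
    icnnMaxSeq n ℓ (k - 1) x + ℓ k x =
      (Finset.Icc 1 k).sup' (Finset.nonempty_Icc.mpr hk) (fun i => ℓ i x) := by
  obtain ⟨i, rfl⟩ := Nat.exists_eq_add_of_le' hk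
  exact icnnMaxSeq_add_eq_sup' n ℓ x i
end

section
/- Let E be a real inner product space, let f : E → ℝ be any function, let g : E → ℝ be convex and differentiable, let S ⊆ E, and let x₀ ∈ S. Suppose x' ∈ S minimizes the convexified objective x ↦ f(x) - (g(x₀) + ⟪∇g(x₀), x - x₀⟫) over S, i.e., f(x') - (g(x₀) + ⟪∇g(x₀), x' - x₀⟫) ≤ f(x) - (g(x₀) + ⟪∇g(x₀), x - x₀⟫) for all x ∈ S. Then f(x') - g(x') ≤ f(x₀) - g(x₀). -/
/-!
The linearization `g x₀ + g'(x₀) (x - x₀)` is a global under-estimator of the convex function `g`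
that is exact at `x₀`, so the convexified objective majorizes `f - g` and agrees with it at `x₀`.
Minimizing the majorant over `S ∋ x₀` therefore cannot increase `f - g`.
-/

theorem ConvexOn.add_apply_sub_le_of_hasFDerivAt {E : Type*} [NormedAddCommGroup E]
    [NormedSpace ℝ E] {s : Set E} {f : E → ℝ} {f' : E →L[ℝ] ℝ} {x y : E}
    (hf : ConvexOn ℝ s f) (hx : x ∈ s) (hy : y ∈ s) (hf' : HasFDerivAt f f' x) :
    f x + f' (y - x) ≤ f y := by
  set L : ℝ →ᵃ[ℝ] E := AffineMap.lineMap x y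
  have hL : HasFDerivAt f f' (L 0) := by simpa [L] using hf'
  have hderiv : HasDerivAt (f ∘ L) (f' (y - x)) 0 :=
    hL.comp_hasDerivAt 0 AffineMap.hasDerivAt_lineMap
  have hslope := (hf.comp_affineMap L).le_slope_of_hasDerivAt
    (by simpa [L] using hx) (by simpa [L] using hy) one_pos hderiv
  simp only [slope_def_field, Function.comp_apply, L, AffineMap.lineMap_apply_zero,
    AffineMap.lineMap_apply_one, sub_zero, div_one] at hslope
  linarith

theorem ccp_step_does_not_increase_objective_general
    {E : Type*} [NormedAddCommGroup E] [InnerProductSpace ℝ E]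
    (f : E → ℝ)
    (g : E → ℝ) (hg_cvx : ConvexOn ℝ Set.univ g) (hg_diff : Differentiable ℝ g)
    (S : Set E) (x₀ : E) (hx₀ : x₀ ∈ S) (x' : E)
    (hmin : ∀ x ∈ S,
      f x' - (g x₀ + fderiv ℝ g x₀ (x' - x₀)) ≤ f x - (g x₀ + fderiv ℝ g x₀ (x - x₀))) :
    f x' - g x' ≤ f x₀ - g x₀ := by
  have htangent : g x₀ + fderiv ℝ g x₀ (x' - x₀) ≤ g x' :=
    hg_cvx.add_apply_sub_le_of_hasFDerivAt trivial trivial (hg_diff x₀).hasFDerivAt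
  calc f x' - g x' ≤ f x' - (g x₀ + fderiv ℝ g x₀ (x' - x₀)) := by linarith
    _ ≤ f x₀ - (g x₀ + fderiv ℝ g x₀ (x₀ - x₀)) := hmin x₀ hx₀
    _ = f x₀ - g x₀ := by rw [sub_self, map_zero, add_zero]

theorem ccp_step_does_not_increase_objective
    {E : Type*} [NormedAddCommGroup E] [InnerProductSpace ℝ E]
    (f : E → ℝ)
    (g : E → ℝ) (hg_cvx : ConvexOn ℝ Set.univ g) (hg_diff : Differentiable ℝ g)
    (S : Set E) (x₀ : E) (hx₀ : x₀ ∈ S) (x' : E) (hx' : x' ∈ S)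
    (hmin : ∀ x ∈ S,
      f x' - (g x₀ + fderiv ℝ g x₀ (x' - x₀)) ≤ f x - (g x₀ + fderiv ℝ g x₀ (x - x₀))) :
    f x' - g x' ≤ f x₀ - g x₀ :=
  ccp_step_does_not_increase_objective_general f g hg_cvx hg_diff S x₀ hx₀ x' hmin
end

section
/- Let E be a real inner product space, let f : E → ℝ be any function, let g : E → ℝ be convex and differentiable, let S ⊆ E be nonempty, and suppose f - g is bounded below on S by some constant B. Let (x_k) be a sequence in S such that for every k, x_{k+1} minimizes the convexified objective x ↦ f(x) - (g(x_k) + ⟪∇g(x_k), x - x_k⟫) over S. Then the sequence of objective values v_k = f(x_k) - g(x_k) is monotone nonincreasing and converges to some limit L ≥ B. -/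
/-! Since `g` is convex, its tangent plane at `x k` lies below it, so the convexified objective
built at `x k` majorizes `f - g` on `S` and touches it at `x k`. Minimizing this majorant
therefore cannot increase `f - g`, and a nonincreasing sequence bounded below by `B` converges
to its infimum, which is at least `B`. -/

open AffineMap

theorem ConvexOn.add_fderiv_sub_le {E : Type*} [NormedAddCommGroup E] [NormedSpace ℝ E]
    {s : Set E} {g : E → ℝ} {g' : E →L[ℝ] ℝ} {x y : E} (hg : ConvexOn ℝ s g)
    (hx : x ∈ s) (hy : y ∈ s) (hg' : HasFDerivAt g g' x) :
    g x + g' (y - x) ≤ g y := by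
  have hline : ConvexOn ℝ (lineMap (k := ℝ) x y ⁻¹' s) (g ∘ lineMap x y) := hg.comp_affineMap _
  have hderiv : HasDerivAt (g ∘ lineMap (k := ℝ) x y) (g' (y - x)) 0 := by
    rw [← lineMap_apply_zero x y (k := ℝ)] at hg'
    exact hg'.comp_hasDerivAt 0 hasDerivAt_lineMap
  have hslope := hline.le_slope_of_hasDerivAt (by simpa) (by simpa) one_pos hderiv
  simp only [slope_def_field, Function.comp_apply, lineMap_apply_zero, lineMap_apply_one,
    sub_zero, div_one] at hslope
  linarith

section Convexified

variable {E : Type*} [NormedAddCommGroup E] [NormedSpace ℝ E]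

noncomputable def convexifiedObjective (f g : E → ℝ) (x₀ y : E) : ℝ :=
  f y - (g x₀ + fderiv ℝ g x₀ (y - x₀))

theorem convexifiedObjective_self (f g : E → ℝ) (x₀ : E) :
    convexifiedObjective f g x₀ x₀ = f x₀ - g x₀ := by
  simp [convexifiedObjective]

theorem sub_le_convexifiedObjective {s : Set E} {f g : E → ℝ} {x₀ y : E} (hg : ConvexOn ℝ s g)
    (hx₀ : x₀ ∈ s) (hy : y ∈ s) (hg₀ : DifferentiableAt ℝ g x₀) :
    f y - g y ≤ convexifiedObjective f g x₀ y := by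
  have := hg.add_fderiv_sub_le hx₀ hy hg₀.hasFDerivAt
  unfold convexifiedObjective
  linarith

theorem sub_le_of_forall_convexifiedObjective_le {s S : Set E} {f g : E → ℝ} {x₀ x₁ : E}
    (hg : ConvexOn ℝ s g) (hg₀ : DifferentiableAt ℝ g x₀) (hx₀s : x₀ ∈ s) (hx₁s : x₁ ∈ s)
    (hx₀S : x₀ ∈ S)
    (hmin : ∀ y ∈ S, convexifiedObjective f g x₀ x₁ ≤ convexifiedObjective f g x₀ y) :
    f x₁ - g x₁ ≤ f x₀ - g x₀ :=
  calc f x₁ - g x₁ ≤ convexifiedObjective f g x₀ x₁ := sub_le_convexifiedObjective hg hx₀s hx₁s hg₀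
    _ ≤ convexifiedObjective f g x₀ x₀ := hmin x₀ hx₀S
    _ = f x₀ - g x₀ := convexifiedObjective_self f g x₀

end Convexified

theorem ccp_objective_values_converge_general
    {E : Type*} [NormedAddCommGroup E] [InnerProductSpace ℝ E]
    (f : E → ℝ)
    (g : E → ℝ) (hg_cvx : ConvexOn ℝ Set.univ g) (hg_diff : Differentiable ℝ g)
    (S : Set E)
    (B : ℝ) (hB : ∀ x ∈ S, B ≤ f x - g x)
    (x : ℕ → E) (hxS : ∀ k, x k ∈ S)
    (hmin : ∀ k, ∀ y ∈ S,
      f (x (k + 1)) - (g (x k) + fderiv ℝ g (x k) (x (k + 1) - x k)) ≤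
        f y - (g (x k) + fderiv ℝ g (x k) (y - x k))) :
    Antitone (fun k => f (x k) - g (x k)) ∧
      ∃ L : ℝ, B ≤ L ∧
        Filter.Tendsto (fun k => f (x k) - g (x k)) Filter.atTop (nhds L) := by
  have hanti : Antitone (fun k => f (x k) - g (x k)) := antitone_nat_of_succ_le fun k =>
    sub_le_of_forall_convexifiedObjective_le hg_cvx (hg_diff (x k)) trivial trivial (hxS k)
      (hmin k)
  have hbdd : ∀ k, B ≤ f (x k) - g (x k) := fun k => hB (x k) (hxS k)
  exact ⟨hanti, ⨅ k, f (x k) - g (x k), le_ciInf hbdd,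
    tendsto_atTop_ciInf hanti ⟨B, Set.forall_mem_range.2 hbdd⟩⟩

theorem ccp_objective_values_converge
    {E : Type*} [NormedAddCommGroup E] [InnerProductSpace ℝ E]
    (f : E → ℝ)
    (g : E → ℝ) (hg_cvx : ConvexOn ℝ Set.univ g) (hg_diff : Differentiable ℝ g)
    (S : Set E) (hS : S.Nonempty)
    (B : ℝ) (hB : ∀ x ∈ S, B ≤ f x - g x)
    (x : ℕ → E) (hxS : ∀ k, x k ∈ S)
    (hmin : ∀ k, ∀ y ∈ S,
      f (x (k + 1)) - (g (x k) + fderiv ℝ g (x k) (x (k + 1) - x k)) ≤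
        f y - (g (x k) + fderiv ℝ g (x k) (y - x k))) :
    Antitone (fun k => f (x k) - g (x k)) ∧
      ∃ L : ℝ, B ≤ L ∧
        Filter.Tendsto (fun k => f (x k) - g (x k)) Filter.atTop (nhds L) :=
  ccp_objective_values_converge_general f g hg_cvx hg_diff S B hB x hxS hmin
end

section
/- Let s be a nonempty compact convex subset of ℝⁿ (EuclideanSpace ℝ (Fin n)), let f : ℝⁿ → ℝ be twice continuously differentiable (ContDiff ℝ 2), and let ε > 0. Then there exist k, m ≥ 1, vectors a₁,…,a_k, c₁,…,c_m ∈ ℝⁿ and reals b₁,…,b_k, d₁,…,d_m such that for every x ∈ s, |f x - (max_{1 ≤ i ≤ k} (⟪aᵢ, x⟫ + bᵢ) - max_{1 ≤ j ≤ m} (⟪cⱼ, x⟫ + dⱼ))| ≤ ε. -/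
/-!
If `fderiv ℝ f` is `L`-Lipschitz on a ball containing `s`, then on that ball `f` agrees with its
tangent plane at `y` up to `L * ‖x - y‖ ^ 2`. Hence `f + L * ‖·‖ ^ 2` and `L * ‖·‖ ^ 2` both lie
above each of their tangent planes and within `2 * L * ‖x - y‖ ^ 2` of the one at `y`. The maxima of
their tangent planes at the points of a `δ`-net of the ball approximate them from below within
`2 * L * δ ^ 2`, and `f` is the difference of the two functions.
-/

open scoped RealInnerProductSpace NNReal Gradient
open Set Metric

section Taylor

variable {E F : Type*} [NormedAddCommGroup E] [NormedSpace ℝ E]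
  [NormedAddCommGroup F] [NormedSpace ℝ F]

theorem Convex.norm_sub_sub_fderiv_le_of_lipschitzOnWith {s : Set E} (hs : Convex ℝ s)
    {f : E → F} (hf : ∀ z ∈ s, DifferentiableAt ℝ f z) {L : ℝ≥0}
    (hL : LipschitzOnWith L (fderiv ℝ f) s) {x y : E} (hx : x ∈ s) (hy : y ∈ s) :
    ‖f x - f y - fderiv ℝ f y (x - y)‖ ≤ L * ‖x - y‖ ^ 2 := by
  set h : E → F := fun z => f z - fderiv ℝ f y z
  have hseg : segment ℝ y x ⊆ s := hs.segment_subset hy hx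
  have hdiff : ∀ z ∈ segment ℝ y x, DifferentiableAt ℝ h z :=
    fun z hz => (hf z (hseg hz)).sub (fderiv ℝ f y).differentiableAt
  have hbound : ∀ z ∈ segment ℝ y x, ‖fderiv ℝ h z‖ ≤ L * ‖x - y‖ := by
    intro z hz
    rw [fderiv_fun_sub (hf z (hseg hz)) (fderiv ℝ f y).differentiableAt,
      ContinuousLinearMap.fderiv]
    calc ‖fderiv ℝ f z - fderiv ℝ f y‖ ≤ L * ‖z - y‖ := hL.norm_sub_le (hseg hz) hy
      _ ≤ L * ‖x - y‖ := by gcongr; exact norm_sub_le_of_mem_segment hz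
  calc ‖f x - f y - fderiv ℝ f y (x - y)‖ = ‖h x - h y‖ := by
        simp only [h, map_sub]; abel_nf
    _ ≤ L * ‖x - y‖ * ‖x - y‖ :=
        (convex_segment y x).norm_image_sub_le_of_norm_fderiv_le hdiff hbound
          (left_mem_segment ℝ y x) (right_mem_segment ℝ y x)
    _ = L * ‖x - y‖ ^ 2 := by ring

theorem ContDiff.exists_norm_sub_sub_fderiv_le {f : E → F} (hf : ContDiff ℝ 2 f) {s : Set E}
    (hs : Convex ℝ s) (hs' : IsCompact s) :
    ∃ L : ℝ≥0, ∀ x ∈ s, ∀ y ∈ s, ‖f x - f y - fderiv ℝ f y (x - y)‖ ≤ L * ‖x - y‖ ^ 2 := by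
  obtain ⟨L, hL⟩ :=
    (hf.fderiv_right (by norm_num)).contDiffOn.exists_lipschitzOnWith one_ne_zero hs hs'
  exact ⟨L, fun x hx y hy => hs.norm_sub_sub_fderiv_le_of_lipschitzOnWith
    (fun z _ => hf.differentiable two_ne_zero z) hL hx hy⟩

end Taylor

section MaxAffine

variable {E : Type*} [NormedAddCommGroup E] [InnerProductSpace ℝ E]

/-- Tangent planes of a convex function whose second derivative is bounded by `2 * C` have this
property. -/
def HasAffineSupportsOn (C : ℝ) (g : E → ℝ) (s : Set E) : Prop :=
  ∀ y ∈ s, ∃ (a : E) (b : ℝ), ∀ x ∈ s, ⟪a, x⟫ + b ≤ g x ∧ g x ≤ ⟪a, x⟫ + b + C * ‖x - y‖ ^ 2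

theorem mul_norm_sq_eq_tangent_add (L : ℝ) (x y : E) :
    L * ‖x‖ ^ 2 = ⟪(2 * L) • y, x⟫ - L * ‖y‖ ^ 2 + L * ‖x - y‖ ^ 2 := by
  rw [norm_sub_sq_real, real_inner_smul_left, real_inner_comm]
  ring

theorem hasAffineSupportsOn_mul_norm_sq {L : ℝ} (hL : 0 ≤ L) (s : Set E) :
    HasAffineSupportsOn L (fun x => L * ‖x‖ ^ 2) s := fun y _ =>
  ⟨(2 * L) • y, -(L * ‖y‖ ^ 2), fun x _ => by
    dsimp only
    rw [mul_norm_sq_eq_tangent_add L x y]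
    constructor <;> nlinarith [sq_nonneg ‖x - y‖]⟩

theorem hasAffineSupportsOn_add_mul_norm_sq [CompleteSpace E] {f : E → ℝ} {s : Set E} {L : ℝ}
    (hf : ∀ x ∈ s, ∀ y ∈ s, ‖f x - f y - fderiv ℝ f y (x - y)‖ ≤ L * ‖x - y‖ ^ 2) :
    HasAffineSupportsOn (2 * L) (fun x => f x + L * ‖x‖ ^ 2) s := fun y hy =>
  ⟨∇ f y + (2 * L) • y, f y - ⟪∇ f y, y⟫ - L * ‖y‖ ^ 2, fun x hx => by
    have hT := abs_le.1 (Real.norm_eq_abs _ ▸ hf x hx y hy)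
    dsimp only
    rw [mul_norm_sq_eq_tangent_add L x y, inner_add_left, inner_gradient_left,
      inner_gradient_left]
    rw [map_sub] at hT
    constructor <;> linarith [hT.1, hT.2]⟩

theorem HasAffineSupportsOn.exists_iSup_approx {C : ℝ} {g : E → ℝ} {s : Set E}
    (h : HasAffineSupportsOn C g s) (hs : IsCompact s) (hne : s.Nonempty) {ε : ℝ} (hε : 0 < ε) :
    ∃ k, 0 < k ∧ ∃ (a : Fin k → E) (b : Fin k → ℝ), ∀ x ∈ s,
      (⨆ i, ⟪a i, x⟫ + b i) ≤ g x ∧ g x ≤ (⨆ i, ⟪a i, x⟫ + b i) + ε := by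
  obtain ⟨δ, hδ, hCδ⟩ : ∃ δ > 0, ∀ r : ℝ, dist r 0 < δ → C * r ^ 2 < ε :=
    Metric.eventually_nhds_iff.1 <|
      (Continuous.tendsto' (by fun_prop) 0 0 (by simp)).eventually (gt_mem_nhds hε)
  obtain ⟨t, hts, ht, hcover⟩ := hs.finite_cover_balls hδ
  obtain ⟨k, y, -, rfl⟩ := ht.fin_param
  rw [biUnion_range] at hcover
  choose a b hab using fun i => h (y i) (hts (mem_range_self i))
  have hnear : ∀ x ∈ s, ∃ i, C * ‖x - y i‖ ^ 2 ≤ ε := fun x hx => by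
    obtain ⟨i, hi⟩ := mem_iUnion.1 (hcover hx)
    exact ⟨i, (hCδ _ (by simpa [dist_eq_norm] using hi)).le⟩
  obtain ⟨i₀, -⟩ := hnear _ hne.some_mem
  have : Nonempty (Fin k) := ⟨i₀⟩
  refine ⟨k, i₀.pos, a, b, fun x hx => ⟨ciSup_le fun i => (hab i x hx).1, ?_⟩⟩
  obtain ⟨i, hi⟩ := hnear x hx
  calc g x ≤ ⟪a i, x⟫ + b i + ε := by linarith [(hab i x hx).2]
    _ ≤ (⨆ i, ⟪a i, x⟫ + b i) + ε := by
        gcongr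
        exact le_ciSup (finite_range fun i => ⟪a i, x⟫ + b i).bddAbove i

end MaxAffine

theorem cdinn_approximates_twice_differentiable_general
    (n : ℕ) (s : Set (EuclideanSpace ℝ (Fin n)))
    (hs_cpt : IsCompact s)
    (f : EuclideanSpace ℝ (Fin n) → ℝ) (hf : ContDiff ℝ 2 f)
    (ε : ℝ) (hε : 0 < ε) :
    ∃ (k m : ℕ), 1 ≤ k ∧ 1 ≤ m ∧
      ∃ (a : Fin k → EuclideanSpace ℝ (Fin n)) (b : Fin k → ℝ)
        (c : Fin m → EuclideanSpace ℝ (Fin n)) (d : Fin m → ℝ),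
        ∀ x ∈ s,
          |f x - ((⨆ i : Fin k, (⟪a i, x⟫ + b i)) - ⨆ j : Fin m, (⟪c j, x⟫ + d j))| ≤ ε := by
  obtain ⟨R, hR, hsR⟩ := hs_cpt.isBounded.subset_closedBall_lt 0 0
  have hK : IsCompact (closedBall (0 : EuclideanSpace ℝ (Fin n)) R) := isCompact_closedBall 0 R
  have hK_ne : (closedBall (0 : EuclideanSpace ℝ (Fin n)) R).Nonempty := nonempty_closedBall.2 hR.le
  obtain ⟨L, hL⟩ := hf.exists_norm_sub_sub_fderiv_le (convex_closedBall 0 R) hK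
  obtain ⟨k, hk, a, b, hab⟩ :=
    (hasAffineSupportsOn_add_mul_norm_sq hL).exists_iSup_approx hK hK_ne hε
  obtain ⟨m, hm, c, d, hcd⟩ :=
    (hasAffineSupportsOn_mul_norm_sq L.coe_nonneg _).exists_iSup_approx hK hK_ne hε
  refine ⟨k, m, hk, hm, a, b, c, d, fun x hx => abs_le.2 ?_⟩
  obtain ⟨hG, hG'⟩ := hab x (hsR hx)
  obtain ⟨hQ, hQ'⟩ := hcd x (hsR hx)
  constructor <;> linarith

theorem cdinn_approximates_twice_differentiable
    (n : ℕ) (s : Set (EuclideanSpace ℝ (Fin n)))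
    (hs_ne : s.Nonempty) (hs_cpt : IsCompact s) (hs_cvx : Convex ℝ s)
    (f : EuclideanSpace ℝ (Fin n) → ℝ) (hf : ContDiff ℝ 2 f)
    (ε : ℝ) (hε : 0 < ε) :
    ∃ (k m : ℕ), 1 ≤ k ∧ 1 ≤ m ∧
      ∃ (a : Fin k → EuclideanSpace ℝ (Fin n)) (b : Fin k → ℝ)
        (c : Fin m → EuclideanSpace ℝ (Fin n)) (d : Fin m → ℝ),
        ∀ x ∈ s,
          |f x - ((⨆ i : Fin k, (⟪a i, x⟫ + b i)) - ⨆ j : Fin m, (⟪c j, x⟫ + d j))| ≤ ε :=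
  cdinn_approximates_twice_differentiable_general n s hs_cpt f hf ε hε
end
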